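/- The optimal payoff is attainable with strictly partial commitment: V̄ = sup over mechanisms Q = (π, χ) with χ < 1 of sup_{E ∈ E(Q)} V(Q,E). -/

import Mathlib

open MeasureTheory Set Filter

noncomputable section

namespace CheapTalk

/-- The economic environment: finite state space `Θ`, full-support prior `ρ`,
continuous strictly monotone state-independent agent utility `uA` normalized on `[0,1]`,
continuous principal utility `uP` with values in `[0,1]`, and actions `0` and `1`
optimal for the principal in some states. -/
structure Env (Θ : Type*) [Fintype Θ] where
  ρ : Θ → ℝ
  ρ_pos : ∀ θ, 0 < ρ θ
  ρ_sum : ∑ θ, ρ θ = 1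
  uA : ℝ → ℝ
  uA_cont : Continuous uA
  uA_mono : StrictMonoOn uA (Icc 0 1)
  uA_zero : uA 0 = 0
  uA_one : uA 1 = 1
  uA_mem : ∀ a ∈ Icc (0:ℝ) 1, uA a ∈ Icc (0:ℝ) 1
  uP : ℝ → Θ → ℝ
  uP_cont : ∀ θ, Continuous fun a => uP a θ
  uP_mem : ∀ a ∈ Icc (0:ℝ) 1, ∀ θ, uP a θ ∈ Icc (0:ℝ) 1
  opt_zero : ∃ θ, ∀ a ∈ Icc (0:ℝ) 1, uP a θ ≤ uP 0 θ
  opt_one : ∃ θ, ∀ a ∈ Icc (0:ℝ) 1, uP a θ ≤ uP 1 θ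

variable {Θ M : Type*} [Fintype Θ] [Fintype M]

/-- A mixed messaging strategy of the agent. -/
def IsStrategy (σ : Θ → M → ℝ) : Prop :=
  (∀ θ m, 0 ≤ σ θ m) ∧ ∀ θ, ∑ m, σ θ m = 1

/-- Ex-ante probability of message `m` under strategy `σ`. -/
def msgProb (E : Env Θ) (σ : Θ → M → ℝ) (m : M) : ℝ := ∑ θ, E.ρ θ * σ θ m

/-- A message is on path if it has positive ex-ante probability. -/
def OnPath (E : Env Θ) (σ : Θ → M → ℝ) (m : M) : Prop := 0 < msgProb E σ m

/-- Bayesian posterior belief after message `m`. -/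
def posterior (E : Env Θ) (σ : Θ → M → ℝ) (m : M) (θ : Θ) : ℝ :=
  E.ρ θ * σ θ m / msgProb E σ m

/-- The principal's expected utility from action `a` under belief `μ`. -/
def pUtil (E : Env Θ) (μ : Θ → ℝ) (a : ℝ) : ℝ := ∑ θ, μ θ * E.uP a θ

/-- The set of the principal's best-response actions to belief `μ`. -/
def BRset (E : Env Θ) (μ : Θ → ℝ) : Set ℝ :=
  {a | a ∈ Icc (0:ℝ) 1 ∧ ∀ b ∈ Icc (0:ℝ) 1, pUtil E μ b ≤ pUtil E μ a}

/-- A mechanism: a committed action plan (a lottery over actions in `[0,1]` for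
each message) and a credibility level `χ ∈ [0,1]`. -/
structure Mech (M : Type*) where
  π : M → Measure ℝ
  π_prob : ∀ m, IsProbabilityMeasure (π m)
  π_supp : ∀ m, π m (Icc 0 1) = 1
  χ : ℝ
  χ_nonneg : 0 ≤ χ
  χ_le_one : χ ≤ 1

/-- The agent's expected payoff from the (uncommitted) principal's response to `m`. -/
def uAOf (E : Env Θ) (σP : M → Measure ℝ) (m : M) : ℝ := ∫ a, E.uA a ∂(σP m)

/-- `σP` is a best-response strategy of the uncommitted principal to `σ`:
probability measures on `[0,1]`, supported on the best-response set at every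
on-path message, and pessimistic (agent payoff `0`) at off-path messages. -/
def IsBR (E : Env Θ) (σ : Θ → M → ℝ) (σP : M → Measure ℝ) : Prop :=
  (∀ m, IsProbabilityMeasure (σP m) ∧ σP m (Icc 0 1) = 1) ∧
  (∀ m, OnPath E σ m → σP m (BRset E (posterior E σ m)) = 1) ∧
  (∀ m, ¬ OnPath E σ m → uAOf E σP m = 0)

/-- The agent's expected payoff from sending message `m` under mechanism `Q`
when the uncommitted principal plays `σP`. -/
def UA (E : Env Θ) (Q : Mech M) (σP : M → Measure ℝ) (m : M) : ℝ :=
  Q.χ * ∫ a, E.uA a ∂(Q.π m) + (1 - Q.χ) * uAOf E σP m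

/-- An equilibrium of the game induced by mechanism `Q`: agent-optimality (AO),
principal-optimality (PO) with pessimistic off-path beliefs, and no perfect
pooling (NPP). -/
structure Eqm (E : Env Θ) (Q : Mech M) where
  σA : Θ → M → ℝ
  σP : M → Measure ℝ
  strat : IsStrategy σA
  br : IsBR E σA σP
  ao : ∀ θ m, 0 < σA θ m → ∀ m', UA E Q σP m' ≤ UA E Q σP m
  npp : ∀ m, msgProb E σA m < 1

/-- The principal's expected payoff in equilibrium `e` of mechanism `Q`. -/
def V (E : Env Θ) (Q : Mech M) (e : Eqm E Q) : ℝ :=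
  Q.χ * ∑ θ, ∑ m, E.ρ θ * e.σA θ m * ∫ a, E.uP a θ ∂(Q.π m) +
    (1 - Q.χ) * ∑ θ, ∑ m, E.ρ θ * e.σA θ m * ∫ a, E.uP a θ ∂(e.σP m)

/-- The principal's no-communication payoff. -/
def VB (E : Env Θ) : ℝ := sSup {v | ∃ a ∈ Icc (0:ℝ) 1, v = pUtil E E.ρ a}

/-- The set of the principal's equilibrium payoffs under `Q`. -/
def eqPayoffs (E : Env Θ) (Q : Mech M) : Set ℝ := {v | ∃ e : Eqm E Q, v = V E Q e}

-- The principal's worst-case (lowest) equilibrium payoff under `Q`;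
-- by convention `VB E` if `Q` admits no equilibrium.
open Classical in
def worstCase (E : Env Θ) (Q : Mech M) : ℝ :=
  if (eqPayoffs E Q).Nonempty then sInf (eqPayoffs E Q) else VB E

-- The principal's best equilibrium payoff under `Q`;
-- by convention `VB E` if `Q` admits no equilibrium.
open Classical in
def bestCase (E : Env Θ) (Q : Mech M) : ℝ :=
  if (eqPayoffs E Q).Nonempty then sSup (eqPayoffs E Q) else VB E

/-- The optimal payoff `V̄`: supremum over mechanisms and their equilibria. -/
def Vbar (E : Env Θ) (M' : Type*) [Fintype M'] : ℝ :=
  sSup {v | ∃ Q : Mech M', v ∈ eqPayoffs E Q}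

/-- The cheap-talk payoff: the principal's highest equilibrium payoff with `χ = 0`. -/
def VCT (E : Env Θ) (M' : Type*) [Fintype M'] : ℝ :=
  sSup {v | ∃ Q : Mech M', Q.χ = 0 ∧ v ∈ eqPayoffs E Q}

/-- `σ` is a messaging strategy of some equilibrium of `Q` (i.e. `σ ∈ Σ(Q)`). -/
def Feasible (E : Env Θ) (Q : Mech M) (σ : Θ → M → ℝ) : Prop := ∃ e : Eqm E Q, e.σA = σ

/-- A payoff is worst-case implementable: it is the worst-case payoff of some
mechanism with `χ < 1`, or a limit of such along `χₙ → 1` (virtual implementation). -/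
def WCImplementable (E : Env Θ) (M' : Type*) [Fintype M'] (v : ℝ) : Prop :=
  (∃ Q : Mech M', Q.χ < 1 ∧ v = worstCase E Q) ∨
  (∃ Qs : ℕ → Mech M',
    (∀ n, (Qs n).χ < 1) ∧
    Tendsto (fun n => (Qs n).χ) atTop (nhds 1) ∧
    Tendsto (fun n => worstCase E (Qs n)) atTop (nhds v))

/-- The worst-case optimal payoff `V⋆`. -/
def Vstar (E : Env Θ) (M' : Type*) [Fintype M'] : ℝ :=
  sSup {v | WCImplementable E M' v}

/-- A two-message strategy: exactly two on-path messages. -/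
def TwoMessage (E : Env Θ) (σ : Θ → M → ℝ) : Prop :=
  IsStrategy σ ∧ ∃ m₁ m₂ : M, m₁ ≠ m₂ ∧ OnPath E σ m₁ ∧ OnPath E σ m₂ ∧
    ∀ m, OnPath E σ m → m = m₁ ∨ m = m₂

/-- `Δ(σ)`: the largest agent-payoff spread across the two on-path messages
that `σ` can induce from a best-responding uncommitted principal. -/
def spread (E : Env Θ) (σ : Θ → M → ℝ) : ℝ :=
  sSup {d | ∃ (σP : M → Measure ℝ) (m₁ m₂ : M), IsBR E σ σP ∧ m₁ ≠ m₂ ∧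
    OnPath E σ m₁ ∧ OnPath E σ m₂ ∧ d = |uAOf E σP m₁ - uAOf E σP m₂|}

/-- A polarizing strategy: a two-message strategy maximizing the spread `Δ(σ)`
(i.e. an element of `Σ⋆`). -/
def Polarizing (E : Env Θ) (σ : Θ → M → ℝ) : Prop :=
  TwoMessage E σ ∧ ∀ σ' : Θ → M → ℝ, TwoMessage E σ' → spread E σ' ≤ spread E σ

/-- `Δ̄`: the maximal spread over two-message strategies. -/
def Δbar (E : Env Θ) (M' : Type*) [Fintype M'] : ℝ :=
  sSup {d | ∃ σ : Θ → M' → ℝ, TwoMessage E σ ∧ d = spread E σ}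

/-- A polarizing mechanism: partial commitment and some polarizing strategy is feasible. -/
def PolarizingMech (E : Env Θ) (Q : Mech M) : Prop :=
  Q.χ < 1 ∧ ∃ σ : Θ → M → ℝ, Polarizing E σ ∧ Feasible E Q σ

/-- Agent payoffs achievable by principal best responses to belief `μ` (the set `u(μ)`). -/
def uSet (E : Env Θ) (μ : Θ → ℝ) : Set ℝ :=
  {u | ∃ ν : Measure ℝ, IsProbabilityMeasure ν ∧ ν (BRset E μ) = 1 ∧ u = ∫ a, E.uA a ∂ν}

/-- The set `U` of pairs of agent payoffs arising from principal best responses to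
the two messages of some Bayes-plausible two-message strategy. -/
def payoffPairs (E : Env Θ) (M' : Type*) [Fintype M'] : Set (ℝ × ℝ) :=
  {p | ∃ (σ : Θ → M' → ℝ) (σP : M' → Measure ℝ) (m₁ m₂ : M'),
    TwoMessage E σ ∧ IsBR E σ σP ∧ m₁ ≠ m₂ ∧ OnPath E σ m₁ ∧ OnPath E σ m₂ ∧
    p = (uAOf E σP m₁, uAOf E σP m₂)}

/-- Genericity 2: the set `U` has a unique polarizing point (up to relabeling). -/
def Genericity2 (E : Env Θ) (M' : Type*) [Fintype M'] : Prop :=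
  ∃! p : ℝ × ℝ, p ∈ payoffPairs E M' ∧ p.1 ≤ p.2 ∧
    ∀ q ∈ payoffPairs E M', |q.1 - q.2| ≤ |p.1 - p.2|

/-- Degenerate belief on state `θ`. -/
def diracBelief (θ : Θ) : Θ → ℝ := ({θ} : Set Θ).indicator fun _ => 1

/-- Genericity 1: at most two best responses at every belief, a unique best
response at Lebesgue-almost-every belief, and a unique optimum in each state. -/
def Genericity1 (E : Env Θ) : Prop :=
  (∀ μ ∈ stdSimplex ℝ Θ, ∃ a b : ℝ, ∀ c ∈ BRset E μ, c = a ∨ c = b) ∧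
  (∃ N : Set (Θ → ℝ), (volume : Measure (Θ → ℝ)) N = 0 ∧
    ∀ μ ∈ stdSimplex ℝ Θ, μ ∉ N → ∃! a, a ∈ BRset E μ) ∧
  (∀ θ : Θ, ∃! a, a ∈ BRset E (diracBelief θ))

/-- No profitable cheap talk: in any equilibrium of the game with `χ = 0`, the
agent's payoff does not exceed his payoff under no communication. -/
def NoCheapTalk (E : Env Θ) (M' : Type*) [Fintype M'] : Prop :=
  ∀ Q : Mech M', Q.χ = 0 → ∀ e : Eqm E Q, ∀ m, OnPath E e.σA m →
    uAOf E e.σP m ≤ sSup (uSet E E.ρ)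

/-- The concave envelope on `[0,1]`: the pointwise smallest concave function
dominating `γ` on `[0,1]`. -/
def concEnv (γ : ℝ → ℝ) (u : ℝ) : ℝ :=
  sInf {v | ∃ g : ℝ → ℝ, ConcaveOn ℝ (Icc (0:ℝ) 1) g ∧
    (∀ x ∈ Icc (0:ℝ) 1, γ x ≤ g x) ∧ v = g u}

/-- The mutual payoff function `γ_θ(u) = u_P(u_A⁻¹(u), θ)`. -/
def γθ (E : Env Θ) (θ : Θ) (u : ℝ) : ℝ := E.uP (Function.invFunOn E.uA (Icc 0 1) u) θ

/-- The principal's committed payoff from full-commitment plan `π` under strategy `σ`. -/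
def VfcPlan (E : Env Θ) (π : M → Measure ℝ) (σ : Θ → M → ℝ) : ℝ :=
  ∑ θ, ∑ m, E.ρ θ * σ θ m * ∫ a, E.uP a θ ∂(π m)

/-- The set `w(Q)` of equilibrium outcome pairs (agent payoff, principal payoff). -/
def outcomes (E : Env Θ) (Q : Mech M) : Set (ℝ × ℝ) :=
  {p | ∃ e : Eqm E Q, p.2 = V E Q e ∧ ∀ m, OnPath E e.σA m → p.1 = UA E Q e.σP m}

/-- The set `w_fc(π, Σ)` of outcome pairs of full-commitment plan `π` under
strategies restricted to `S`. -/
def outcomesFC (E : Env Θ) (π : M → Measure ℝ) (S : Set (Θ → M → ℝ)) : Set (ℝ × ℝ) :=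
  {p | ∃ σ ∈ S, p.2 = VfcPlan E π σ ∧ ∀ m, OnPath E σ m → p.1 = ∫ a, E.uA a ∂(π m)}


/-! ### Auxiliary lemmas for the proof of `partial_commitment_attains_optimum` -/

section Aux

lemma PCaux.ae_mem_Icc {μ : Measure ℝ} (hμ : IsProbabilityMeasure μ) (hs : μ (Icc 0 1) = 1) :
    ∀ᵐ a ∂μ, a ∈ Icc (0:ℝ) 1 := by
  rw [ae_iff]
  have h : μ (Icc (0:ℝ) 1)ᶜ = μ univ - μ (Icc 0 1) :=
    measure_compl measurableSet_Icc (by rw [hs]; exact ENNReal.one_ne_top)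
  simp only [hs, hμ.measure_univ, tsub_self] at h
  exact h

lemma PCaux.integrable_of_supp {μ : Measure ℝ} (hμ : IsProbabilityMeasure μ)
    (hs : μ (Icc 0 1) = 1) {f : ℝ → ℝ} (hf : Continuous f)
    (hb : ∀ a ∈ Icc (0:ℝ) 1, f a ∈ Icc (0:ℝ) 1) : Integrable f μ := by
  refine (integrable_const (1:ℝ)).mono' hf.aestronglyMeasurable ?_
  filter_upwards [PCaux.ae_mem_Icc hμ hs] with a ha
  have := hb a ha
  rw [Real.norm_eq_abs, abs_le]
  constructor <;> linarith [this.1, this.2]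

lemma PCaux.integral_mem_Icc {μ : Measure ℝ} (hμ : IsProbabilityMeasure μ)
    (hs : μ (Icc 0 1) = 1) {f : ℝ → ℝ} (hf : Continuous f)
    (hb : ∀ a ∈ Icc (0:ℝ) 1, f a ∈ Icc (0:ℝ) 1) : (∫ a, f a ∂μ) ∈ Icc (0:ℝ) 1 := by
  constructor
  · refine integral_nonneg_of_ae ?_
    filter_upwards [PCaux.ae_mem_Icc hμ hs] with a ha using (hb a ha).1
  · calc ∫ a, f a ∂μ ≤ ∫ _, (1:ℝ) ∂μ := by
          refine integral_mono_ae (PCaux.integrable_of_supp hμ hs hf hb) (integrable_const 1) ?_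
          filter_upwards [PCaux.ae_mem_Icc hμ hs] with a ha using (hb a ha).2
    _ = 1 := by simp

/-- A mixture of a measure with a Dirac mass. -/
def PCmix (μ : Measure ℝ) (ε x : ℝ) : Measure ℝ :=
  ENNReal.ofReal (1 - ε) • μ + ENNReal.ofReal ε • Measure.dirac x

lemma PCaux.mix_prob {μ : Measure ℝ} (hμ : IsProbabilityMeasure μ) {ε : ℝ} (h0 : 0 ≤ ε)
    (h1 : ε ≤ 1) (x : ℝ) : IsProbabilityMeasure (PCmix μ ε x) := by
  constructor
  simp only [PCmix, Measure.add_apply, Measure.smul_apply, smul_eq_mul, hμ.measure_univ,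
    Measure.dirac_apply_of_mem (mem_univ x), mul_one]
  rw [← ENNReal.ofReal_add (by linarith) h0]
  norm_num

lemma PCaux.mix_Icc {μ : Measure ℝ} (hs : μ (Icc 0 1) = 1) {ε x : ℝ} (h0 : 0 ≤ ε) (h1 : ε ≤ 1)
    (hx : x ∈ Icc (0:ℝ) 1) : PCmix μ ε x (Icc 0 1) = 1 := by
  simp only [PCmix, Measure.add_apply, Measure.smul_apply, smul_eq_mul, hs,
    Measure.dirac_apply' _ measurableSet_Icc, Set.indicator_of_mem hx, mul_one]
  rw [show ((1 : ℝ → ENNReal) x) = 1 from rfl, mul_one, ← ENNReal.ofReal_add (by linarith) h0]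
  norm_num

lemma PCaux.mix_integral {μ : Measure ℝ} (hμ : IsProbabilityMeasure μ) (hs : μ (Icc 0 1) = 1)
    {ε x : ℝ} (h0 : 0 ≤ ε) (h1 : ε ≤ 1) (hx : x ∈ Icc (0:ℝ) 1)
    {f : ℝ → ℝ} (hf : Continuous f) (hb : ∀ a ∈ Icc (0:ℝ) 1, f a ∈ Icc (0:ℝ) 1) :
    ∫ a, f a ∂(PCmix μ ε x) = (1 - ε) * ∫ a, f a ∂μ + ε * f x := by
  have hint : Integrable f μ := PCaux.integrable_of_supp hμ hs hf hb
  have hd : Integrable f (Measure.dirac x) := by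
    refine PCaux.integrable_of_supp ?_ ?_ hf hb
    · infer_instance
    · simp [Measure.dirac_apply' _ measurableSet_Icc, Set.indicator_of_mem hx]
  rw [PCmix, integral_add_measure (hint.smul_measure ENNReal.ofReal_ne_top)
      (hd.smul_measure ENNReal.ofReal_ne_top), integral_smul_measure, integral_smul_measure,
    integral_dirac, ENNReal.toReal_ofReal (by linarith : (0:ℝ) ≤ 1 - ε),
    ENNReal.toReal_ofReal h0, smul_eq_mul, smul_eq_mul]

variable {Θ M : Type*} [Fintype Θ] [Fintype M]

lemma PCaux.sum_weight_eq_one (E : Env Θ) {σ : Θ → M → ℝ} (hσ : IsStrategy σ) :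
    ∑ θ, ∑ m, E.ρ θ * σ θ m = 1 := by
  have h : ∀ θ : Θ, ∑ m, E.ρ θ * σ θ m = E.ρ θ := fun θ => by
    rw [← Finset.mul_sum, hσ.2 θ, mul_one]
  rw [Finset.sum_congr rfl fun θ _ => h θ, E.ρ_sum]

lemma PCaux.weighted_mem (E : Env Θ) {σ : Θ → M → ℝ} (hσ : IsStrategy σ) {w : Θ → M → ℝ}
    (hw : ∀ θ m, w θ m ∈ Icc (0:ℝ) 1) :
    (∑ θ, ∑ m, E.ρ θ * σ θ m * w θ m) ∈ Icc (0:ℝ) 1 := by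
  constructor
  · refine Finset.sum_nonneg fun θ _ => Finset.sum_nonneg fun m _ => ?_
    exact mul_nonneg (mul_nonneg (E.ρ_pos θ).le (hσ.1 θ m)) (hw θ m).1
  · calc ∑ θ, ∑ m, E.ρ θ * σ θ m * w θ m ≤ ∑ θ, ∑ m, E.ρ θ * σ θ m := by
          refine Finset.sum_le_sum fun θ _ => Finset.sum_le_sum fun m _ => ?_
          have h1 := mul_nonneg (E.ρ_pos θ).le (hσ.1 θ m)
          nlinarith [(hw θ m).2, (hw θ m).1]
    _ = 1 := PCaux.sum_weight_eq_one E hσ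

lemma PCaux.V_le_one (E : Env Θ) (Q : Mech M) (e : Eqm E Q) : V E Q e ≤ 1 := by
  have hA := PCaux.weighted_mem E e.strat (w := fun θ m => ∫ a, E.uP a θ ∂(Q.π m))
    (fun θ m => PCaux.integral_mem_Icc (Q.π_prob m) (Q.π_supp m) (E.uP_cont θ)
      (fun a ha => E.uP_mem a ha θ))
  have hB := PCaux.weighted_mem E e.strat (w := fun θ m => ∫ a, E.uP a θ ∂(e.σP m))
    (fun θ m => PCaux.integral_mem_Icc (e.br.1 m).1 (e.br.1 m).2 (E.uP_cont θ)
      (fun a ha => E.uP_mem a ha θ))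
  have h0 := Q.χ_nonneg
  have h1 := Q.χ_le_one
  unfold V
  nlinarith [hA.1, hA.2, hB.1, hB.2]

lemma PCaux.Vbound (E : Env Θ) (Q Q' : Mech M) (e : Eqm E Q) (e' : Eqm E Q')
    (hσ : e'.σA = e.σA) (hσP : e'.σP = e.σP) (hχ : Q.χ = 1) {χ' : ℝ}
    (hχ' : Q'.χ = χ') (h0 : 0 ≤ χ') (h1 : χ' ≤ 1)
    (hdiff : ∀ θ m, 0 < e.σA θ m →
      |(∫ a, E.uP a θ ∂(Q'.π m)) - ∫ a, E.uP a θ ∂(Q.π m)| ≤ 3 * (1 - χ')) :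
    |V E Q' e' - V E Q e| ≤ 5 * (1 - χ') := by
  unfold V
  rw [hσ, hσP, hχ, hχ']
  set A : ℝ := ∑ θ, ∑ m, E.ρ θ * e.σA θ m * ∫ a, E.uP a θ ∂(Q.π m) with hAdef
  set A' : ℝ := ∑ θ, ∑ m, E.ρ θ * e.σA θ m * ∫ a, E.uP a θ ∂(Q'.π m) with hA'def
  set B : ℝ := ∑ θ, ∑ m, E.ρ θ * e.σA θ m * ∫ a, E.uP a θ ∂(e.σP m) with hBdef
  have hA'mem : A' ∈ Icc (0:ℝ) 1 := by
    rw [hA'def]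
    exact PCaux.weighted_mem E e.strat fun θ m =>
      PCaux.integral_mem_Icc (Q'.π_prob m) (Q'.π_supp m) (E.uP_cont θ)
        (fun a ha => E.uP_mem a ha θ)
  have hBmem : B ∈ Icc (0:ℝ) 1 := by
    rw [hBdef]
    exact PCaux.weighted_mem E e.strat fun θ m =>
      PCaux.integral_mem_Icc (e.br.1 m).1 (e.br.1 m).2 (E.uP_cont θ)
        (fun a ha => E.uP_mem a ha θ)
  have key : |A' - A| ≤ 3 * (1 - χ') := by
    have hdiffeq : A' - A = ∑ θ, ∑ m, (E.ρ θ * e.σA θ m * (∫ a, E.uP a θ ∂(Q'.π m))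
        - E.ρ θ * e.σA θ m * (∫ a, E.uP a θ ∂(Q.π m))) := by
      rw [hA'def, hAdef, ← Finset.sum_sub_distrib]
      exact Finset.sum_congr rfl fun θ _ => (Finset.sum_sub_distrib _ _).symm
    rw [hdiffeq]
    refine le_trans (Finset.abs_sum_le_sum_abs _ _) ?_
    refine le_trans (Finset.sum_le_sum fun θ _ => Finset.abs_sum_le_sum_abs _ _) ?_
    have hterm : ∀ θ m, |E.ρ θ * e.σA θ m * (∫ a, E.uP a θ ∂(Q'.π m))
        - E.ρ θ * e.σA θ m * (∫ a, E.uP a θ ∂(Q.π m))|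
        ≤ E.ρ θ * e.σA θ m * (3 * (1 - χ')) := by
      intro θ m
      rcases (e.strat.1 θ m).eq_or_lt with h | h
      · rw [← h]
        simp
      · have h2 : E.ρ θ * e.σA θ m * (∫ a, E.uP a θ ∂(Q'.π m))
            - E.ρ θ * e.σA θ m * (∫ a, E.uP a θ ∂(Q.π m))
            = E.ρ θ * e.σA θ m * ((∫ a, E.uP a θ ∂(Q'.π m)) - ∫ a, E.uP a θ ∂(Q.π m)) := by
          ring
        rw [h2, abs_mul, abs_of_nonneg (mul_nonneg (E.ρ_pos θ).le (e.strat.1 θ m))]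
        exact mul_le_mul_of_nonneg_left (hdiff θ m h)
          (mul_nonneg (E.ρ_pos θ).le (e.strat.1 θ m))
    refine le_trans (Finset.sum_le_sum fun θ _ => Finset.sum_le_sum fun m _ => hterm θ m) ?_
    have hfac : ∑ θ, ∑ m, E.ρ θ * e.σA θ m * (3 * (1 - χ'))
        = (∑ θ, ∑ m, E.ρ θ * e.σA θ m) * (3 * (1 - χ')) := by
      rw [Finset.sum_mul]
      exact Finset.sum_congr rfl fun θ _ => (Finset.sum_mul _ _ _).symm
    rw [hfac, PCaux.sum_weight_eq_one E e.strat, one_mul]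
  have hmain : (χ' * A' + (1 - χ') * B) - (1 * A + (1 - 1) * B)
      = (A' - A) + (1 - χ') * (B - A') := by ring
  rw [hmain]
  refine le_trans (abs_add_le _ _) ?_
  have hb : |B - A'| ≤ 1 :=
    abs_le.mpr ⟨by linarith [hBmem.1, hA'mem.2], by linarith [hBmem.2, hA'mem.1]⟩
  have h3 : |(1 - χ') * (B - A')| ≤ (1 - χ') * 1 := by
    rw [abs_mul, abs_of_nonneg (by linarith : (0:ℝ) ≤ 1 - χ')]
    exact mul_le_mul_of_nonneg_left hb (by linarith)
  linarith [key]

lemma PCaux.approx (E : Env Θ) (Q : Mech M) (hχ : Q.χ = 1) (e : Eqm E Q) {χ' : ℝ}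
    (h23 : 2/3 ≤ χ') (hlt : χ' < 1) :
    ∃ (Q' : Mech M) (e' : Eqm E Q'), Q'.χ < 1 ∧ |V E Q' e' - V E Q e| ≤ 5 * (1 - χ') := by
  classical
  have hχ'pos : (0:ℝ) < χ' := by linarith
  set CA : M → ℝ := fun m => ∫ a, E.uA a ∂(Q.π m) with hCAdef
  set u : M → ℝ := fun m => uAOf E e.σP m with hudef
  have hCAmem : ∀ m, CA m ∈ Icc (0:ℝ) 1 := fun m =>
    PCaux.integral_mem_Icc (Q.π_prob m) (Q.π_supp m) E.uA_cont E.uA_mem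
  have humem : ∀ m, u m ∈ Icc (0:ℝ) 1 := fun m =>
    PCaux.integral_mem_Icc (e.br.1 m).1 (e.br.1 m).2 E.uA_cont E.uA_mem
  have hUA : ∀ m, UA E Q e.σP m = CA m := fun m => by
    simp [UA, hχ, hCAdef]
  have hsum : ∑ m, msgProb E e.σA m = 1 := by
    unfold msgProb; rw [Finset.sum_comm]; exact PCaux.sum_weight_eq_one E e.strat
  have hex : ∃ m₀, OnPath E e.σA m₀ := by
    by_contra hcon; push_neg at hcon
    have h1 : ∑ m, msgProb E e.σA m ≤ 0 :=
      Finset.sum_nonpos fun m _ => le_of_not_gt (hcon m)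
    linarith
  obtain ⟨m₀, hm₀⟩ := hex
  have hexθ : ∀ m, OnPath E e.σA m → ∃ θ, 0 < e.σA θ m := by
    intro m hm
    by_contra hcon; push_neg at hcon
    have h1 : msgProb E e.σA m = 0 := by
      unfold msgProb
      refine Finset.sum_eq_zero fun θ _ => ?_
      rw [le_antisymm (hcon θ) (e.strat.1 θ m), mul_zero]
    exact absurd h1 (ne_of_gt hm)
  set c : ℝ := CA m₀ with hcdef
  have hcmem : c ∈ Icc (0:ℝ) 1 := hCAmem m₀
  have hconst : ∀ m, OnPath E e.σA m → CA m = c := by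
    intro m hm
    obtain ⟨θ, hθ⟩ := hexθ m hm
    obtain ⟨θ₀, hθ₀⟩ := hexθ m₀ hm₀
    have h1 := e.ao θ m hθ m₀
    have h2 := e.ao θ₀ m₀ hθ₀ m
    rw [hUA, hUA] at h1 h2
    exact le_antisymm h2 h1
  set w : ℝ := if c ≤ 1/2 then 1 else 0 with hwdef
  have hwmem : w ∈ Icc (0:ℝ) 1 := by
    rw [hwdef]; split <;> norm_num
  have huAw : E.uA w = w := by
    rw [hwdef]; split <;> simp [E.uA_zero, E.uA_one]
  have hwc : w - c ≠ 0 := by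
    rw [hwdef]; split
    · rename_i h; intro hcon; have := sub_eq_zero.mp hcon; linarith
    · rename_i h; push_neg at h; intro hcon
      have h1 : c = 0 := by have := sub_eq_zero.mp hcon; linarith
      linarith
  have hratio : ∀ m, 0 ≤ (w - u m) / (w - c) ∧ (w - u m) / (w - c) ≤ 2 := by
    intro m
    have hum := humem m
    by_cases h : c ≤ 1/2
    · have hw1 : w = 1 := by rw [hwdef, if_pos h]
      constructor
      · exact div_nonneg (by rw [hw1]; linarith [hum.2]) (by rw [hw1]; linarith)
      · rw [hw1, div_le_iff₀ (by linarith)]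
        linarith [hum.1]
    · have hw0 : w = 0 := by rw [hwdef, if_neg h]
      push_neg at h
      constructor
      · rw [hw0, zero_sub, zero_sub, neg_div_neg_eq]
        exact div_nonneg hum.1 (by linarith)
      · rw [hw0, zero_sub, zero_sub, neg_div_neg_eq, div_le_iff₀ (by linarith)]
        linarith [hum.2]
  set ε : M → ℝ := fun m => ((1 - χ') / χ') * ((w - u m) / (w - c)) with hεdef
  have hε0 : ∀ m, 0 ≤ ε m := fun m =>
    mul_nonneg (div_nonneg (by linarith) hχ'pos.le) (hratio m).1
  have hε3 : ∀ m, ε m ≤ 3 * (1 - χ') := by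
    intro m
    calc ε m ≤ ((1 - χ') / χ') * 2 :=
          mul_le_mul_of_nonneg_left (hratio m).2 (div_nonneg (by linarith) hχ'pos.le)
    _ ≤ 3 * (1 - χ') := by
          rw [div_mul_eq_mul_div, div_le_iff₀ hχ'pos]; nlinarith
  have hε1 : ∀ m, ε m ≤ 1 := fun m => le_trans (hε3 m) (by linarith)
  have hcancel : ∀ m, ε m * (w - c) = ((1 - χ') / χ') * (w - u m) := fun m => by
    rw [hεdef]
    dsimp only
    rw [mul_assoc, div_mul_cancel₀ _ hwc]
  set π' : M → Measure ℝ := fun m =>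
    if OnPath E e.σA m then PCmix (Q.π m) (ε m) w else Measure.dirac 0 with hπ'def
  have hπprob : ∀ m, IsProbabilityMeasure (π' m) := by
    intro m; rw [hπ'def]; dsimp only; split
    · exact PCaux.mix_prob (Q.π_prob m) (hε0 m) (hε1 m) w
    · infer_instance
  have hπsupp : ∀ m, π' m (Icc 0 1) = 1 := by
    intro m; rw [hπ'def]; dsimp only; split
    · exact PCaux.mix_Icc (Q.π_supp m) (hε0 m) (hε1 m) hwmem
    · rw [Measure.dirac_apply' _ measurableSet_Icc,
        Set.indicator_of_mem (by norm_num : (0:ℝ) ∈ Icc (0:ℝ) 1)]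
      rfl
  have hCA' : ∀ m, OnPath E e.σA m →
      (∫ a, E.uA a ∂(π' m)) = c + ((1 - χ') / χ') * (w - u m) := by
    intro m hm
    rw [hπ'def]; dsimp only; rw [if_pos hm,
      PCaux.mix_integral (Q.π_prob m) (Q.π_supp m) (hε0 m) (hε1 m) hwmem E.uA_cont E.uA_mem,
      huAw]
    have h1 : (∫ a, E.uA a ∂(Q.π m)) = c := hconst m hm
    rw [h1]
    have h2 : (1 - ε m) * c + ε m * w = c + ε m * (w - c) := by ring
    rw [h2, hcancel m]
  have hCA'0 : ∀ m, ¬ OnPath E e.σA m → (∫ a, E.uA a ∂(π' m)) = 0 := by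
    intro m hm
    rw [hπ'def]; dsimp only; rw [if_neg hm, integral_dirac, E.uA_zero]
  set t : ℝ := χ' * c + (1 - χ') * w with htdef
  have htnonneg : 0 ≤ t :=
    add_nonneg (mul_nonneg hχ'pos.le hcmem.1) (mul_nonneg (by linarith) hwmem.1)
  have honpath : ∀ θ m, 0 < e.σA θ m → OnPath E e.σA m := by
    intro θ m hpos
    have h1 : 0 < E.ρ θ * e.σA θ m := mul_pos (E.ρ_pos θ) hpos
    refine lt_of_lt_of_le h1 ?_
    exact Finset.single_le_sum
      (fun θ' _ => mul_nonneg (E.ρ_pos θ').le (e.strat.1 θ' m)) (Finset.mem_univ θ)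
  have hdiff : ∀ θ m, 0 < e.σA θ m →
      |(∫ a, E.uP a θ ∂(π' m)) - ∫ a, E.uP a θ ∂(Q.π m)| ≤ 3 * (1 - χ') := by
    intro θ m hpos
    have hmon := honpath θ m hpos
    have hint : (∫ a, E.uP a θ ∂(π' m))
        = (1 - ε m) * (∫ a, E.uP a θ ∂(Q.π m)) + ε m * E.uP w θ := by
      rw [hπ'def]; dsimp only; rw [if_pos hmon,
        PCaux.mix_integral (Q.π_prob m) (Q.π_supp m) (hε0 m) (hε1 m) hwmem (E.uP_cont θ)
          (fun a ha => E.uP_mem a ha θ)]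
    rw [hint]
    have h1 : (1 - ε m) * (∫ a, E.uP a θ ∂(Q.π m)) + ε m * E.uP w θ
        - (∫ a, E.uP a θ ∂(Q.π m)) = ε m * (E.uP w θ - ∫ a, E.uP a θ ∂(Q.π m)) := by ring
    rw [h1, abs_mul, abs_of_nonneg (hε0 m)]
    have hPm : (∫ a, E.uP a θ ∂(Q.π m)) ∈ Icc (0:ℝ) 1 :=
      PCaux.integral_mem_Icc (Q.π_prob m) (Q.π_supp m) (E.uP_cont θ)
        (fun a ha => E.uP_mem a ha θ)
    have hw2 := E.uP_mem w hwmem θ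
    have h2 : |E.uP w θ - ∫ a, E.uP a θ ∂(Q.π m)| ≤ 1 :=
      abs_le.mpr ⟨by linarith [hw2.1, hPm.2], by linarith [hw2.2, hPm.1]⟩
    calc ε m * |E.uP w θ - ∫ a, E.uP a θ ∂(Q.π m)| ≤ ε m * 1 :=
          mul_le_mul_of_nonneg_left h2 (hε0 m)
    _ = ε m := mul_one _
    _ ≤ 3 * (1 - χ') := hε3 m
  refine ⟨⟨π', hπprob, hπsupp, χ', by linarith, hlt.le⟩,
    ⟨e.σA, e.σP, e.strat, e.br, ?_, e.npp⟩, hlt, ?_⟩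
  · -- agent optimality
    intro θ m hpos m'
    have hmon := honpath θ m hpos
    have hon : ∀ mm, OnPath E e.σA mm →
        UA E ⟨π', hπprob, hπsupp, χ', by linarith, hlt.le⟩ e.σP mm = t := by
      intro mm hmm
      show χ' * (∫ a, E.uA a ∂(π' mm)) + (1 - χ') * uAOf E e.σP mm = t
      rw [hCA' mm hmm, htdef]
      have hN : χ' ≠ 0 := ne_of_gt hχ'pos
      field_simp
      ring
    by_cases h' : OnPath E e.σA m'
    · rw [hon m hmon, hon m' h']
    · have hoff : UA E ⟨π', hπprob, hπsupp, χ', by linarith, hlt.le⟩ e.σP m' = 0 := by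
        show χ' * (∫ a, E.uA a ∂(π' m')) + (1 - χ') * uAOf E e.σP m' = 0
        rw [hCA'0 m' h', e.br.2.2 m' h']
        ring
      rw [hon m hmon, hoff]
      exact htnonneg
  · refine PCaux.Vbound E Q _ e _ ?_ ?_ hχ ?_ hχ'pos.le hlt.le ?_
    · rfl
    · rfl
    · rfl
    · exact hdiff

end Aux


/-- The optimal payoff is attainable with strictly partial
commitment: `V̄ = sup_{Q : χ < 1} sup_{E ∈ E(Q)} V(Q,E)`. -/
theorem partial_commitment_attains_optimum
    {Θ M : Type*} [Fintype Θ] [Fintype M] (E : Env Θ)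
    (hn : 2 ≤ Fintype.card Θ) (hM : Fintype.card Θ ≤ Fintype.card M) :
    Vbar E M = sSup {v | ∃ Q : Mech M, Q.χ < 1 ∧ v ∈ eqPayoffs E Q} := by
  classical
  unfold Vbar
  set S : Set ℝ := {v | ∃ Q : Mech M, v ∈ eqPayoffs E Q} with hS
  set S' : Set ℝ := {v | ∃ Q : Mech M, Q.χ < 1 ∧ v ∈ eqPayoffs E Q} with hS'
  have hsub : S' ⊆ S := by
    rintro v ⟨Q, _, hv⟩
    exact ⟨Q, hv⟩
  have hbddS : BddAbove S := by
    refine ⟨1, fun v hv => ?_⟩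
    obtain ⟨Q, e, rfl⟩ := hv
    exact PCaux.V_le_one E Q e
  have hbddS' : BddAbove S' := BddAbove.mono hsub hbddS
  have happrox : ∀ v ∈ S, ∀ δ : ℝ, 0 < δ → ∃ v' ∈ S', v - δ ≤ v' := by
    intro v hv δ hδ
    obtain ⟨Q, e, rfl⟩ := hv
    rcases lt_or_eq_of_le Q.χ_le_one with h | h
    · exact ⟨V E Q e, ⟨Q, h, e, rfl⟩, by linarith⟩
    · have h23 : 2/3 ≤ max (2/3 : ℝ) (1 - δ/5) := le_max_left _ _
      have hlt : max (2/3 : ℝ) (1 - δ/5) < 1 := max_lt (by norm_num) (by linarith)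
      obtain ⟨Q', e', hlt', hb⟩ := PCaux.approx E Q h e h23 hlt
      refine ⟨V E Q' e', ⟨Q', hlt', e', rfl⟩, ?_⟩
      have h5 : 1 - max (2/3 : ℝ) (1 - δ/5) ≤ δ/5 := by
        have := le_max_right (2/3 : ℝ) (1 - δ/5)
        linarith
      have habs := (abs_le.mp hb).1
      linarith
  rcases S.eq_empty_or_nonempty with hemp | hne
  · have hemp' : S' = ∅ := eq_empty_of_subset_empty (hemp ▸ hsub)
    rw [hemp, hemp']
  · obtain ⟨v₀, hv₀⟩ := hne
    obtain ⟨v₁, hv₁, -⟩ := happrox v₀ hv₀ 1 one_pos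
    apply le_antisymm
    · refine csSup_le ⟨v₀, hv₀⟩ fun v hv => ?_
      refine le_of_forall_pos_le_add fun δ hδ => ?_
      obtain ⟨v', hv', hle⟩ := happrox v hv δ hδ
      have := le_csSup hbddS' hv'
      linarith
    · exact csSup_le_csSup hbddS ⟨v₁, hv₁⟩ hsub


end CheapTalk
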